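/- Assume the Framework. Let f ∈ H ∖ {0} and let J := f − P_{[zf]} f be the S-inner function associated with f. If w ∈ Ω ∖ {0} is such that (ι J)(w) = 0 but (ι f)(w) ≠ 0, then |w| · ‖Q₀‖ · ‖S‖ · ‖Q_w‖ ≥ (1 + ‖S‖² ‖Q_w‖²)^{1/2}, where ‖·‖ denotes operator norm; equivalently, |w| ≥ (1 + ‖S‖²‖Q_w‖²)^{1/2} / (‖Q₀‖‖S‖‖Q_w‖). -/

import Mathlib

open scoped ComplexInnerProductSpace

/-- A Hilbert space `H` of analytic functions on a bounded domain `Ω ⊆ ℂ` with `0 ∈ Ω`,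
realized by an injective linear map `ι` into functions, satisfying conditions
(P1)–(P4) of Cheng–Mashreghi–Ross, together with its reproducing kernels. -/
structure RKFramework (Ω : Set ℂ) (H : Type*) [NormedAddCommGroup H]
    [InnerProductSpace ℂ H] [CompleteSpace H] where
  /-- `Ω` is open. -/
  isOpen : IsOpen Ω
  /-- `Ω` is connected. -/
  isConnected : IsConnected Ω
  /-- `Ω` is bounded. -/
  isBounded : Bornology.IsBounded Ω
  /-- `0 ∈ Ω`. -/
  zero_mem : (0 : ℂ) ∈ Ω
  /-- the realization of elements of `H` as functions (only values on `Ω` matter). -/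
  ι : H →ₗ[ℂ] (ℂ → ℂ)
  /-- `ι` is injective as a map into functions on `Ω`. -/
  ι_inj : ∀ f g : H, Set.EqOn (ι f) (ι g) Ω → f = g
  /-- each `ι f` is analytic on `Ω`. -/
  analytic : ∀ f : H, DifferentiableOn ℂ (ι f) Ω
  /-- (P1): point evaluation of every derivative is a bounded functional. -/
  eval_bounded : ∀ w ∈ Ω, ∀ j : ℕ, ∃ C : ℝ, ∀ f : H,
    ‖iteratedDerivWithin j (ι f) Ω w‖ ≤ C * ‖f‖
  /-- (P2): the shift operator `S`. -/
  S : H →L[ℂ] H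
  ι_S : ∀ f : H, ∀ z ∈ Ω, ι (S f) z = z * ι f z
  /-- (P3): the monomials `z^j` belong to `H` … -/
  p : ℕ → H
  ι_p : ∀ j : ℕ, ∀ z ∈ Ω, ι (p j) z = z ^ j
  /-- … and the polynomials are dense in `H`. -/
  span_p : (Submodule.span ℂ (Set.range p)).topologicalClosure = ⊤
  /-- (P4): the difference-quotient operators `Q_w`. -/
  Q : ℂ → H →L[ℂ] H
  ι_Q : ∀ w ∈ Ω, ∀ f : H, ∀ z ∈ Ω, z ≠ w → ι (Q w f) z = (ι f z - ι f w) / (z - w)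
  /-- the reproducing kernel `k_w` at `w ∈ Ω` … -/
  k : ℂ → H
  /-- … satisfying `⟪f, k_w⟫ = (ι f)(w)` (with the paper's inner product linear in its
  first slot; Mathlib's inner product is linear in the second slot). -/
  reproducing : ∀ w ∈ Ω, ∀ f : H, ⟪k w, f⟫ = ι f w

variable {Ω : Set ℂ} {H : Type*} [NormedAddCommGroup H] [InnerProductSpace ℂ H] [CompleteSpace H]

/-- `[zf]`: the closed linear span of `{S^n f : n ≥ 1}`. -/
abbrev RKFramework.zspan (F : RKFramework Ω H) (f : H) : Submodule ℂ H :=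
  (Submodule.span ℂ {x | ∃ n : ℕ, 1 ≤ n ∧ x = (F.S ^ n) f}).topologicalClosure

/-- `[f]`: the closed linear span of `{S^n f : n ≥ 0}`. -/
abbrev RKFramework.fullSpan (F : RKFramework Ω H) (f : H) : Submodule ℂ H :=
  (Submodule.span ℂ (Set.range fun n : ℕ => (F.S ^ n) f)).topologicalClosure

/-- The `S`-inner function `J = f − P_{[zf]} f` associated with `f`. -/
noncomputable def RKFramework.J (F : RKFramework Ω H) (f : H) : H :=
  f - ((F.zspan f).orthogonalProjection f : H)

/-! Put `J = f − P_{[zf]} f` and `h = Q_w J`, so that `J = (S − w) h` because `J(w) = 0`.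
Since `f(w) ≠ 0`, `Q_w` maps the elements of `[f]` vanishing at `w` into `[f]`; hence `h ∈ [f]`
and `S h ∈ [zf] ⊥ J`. Pythagoras applied to `w h = S h − J` gives
`|w|²‖h‖² = ‖S h‖² + ‖J‖²`, while `h = Q₀ S h` and `h = Q_w J` give `‖h‖ ≤ ‖Q₀‖‖S h‖` and
`‖h‖ ≤ ‖Q_w‖‖J‖`. As `J ≠ 0` (a nonzero `f` never lies in `[zf]`, for it would then vanish to
infinite order at `0`), this yields `‖Q₀‖⁻² + ‖Q_w‖⁻² ≤ |w|²`, and `‖Q₀‖‖S‖ ≥ 1` finishes. -/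

open Filter Topology

theorem ContinuousLinearMap.apply_mem_of_mem_topologicalClosure_span {R E F : Type*} [Semiring R]
    [AddCommMonoid E] [TopologicalSpace E] [Module R E] [ContinuousAdd E]
    [ContinuousConstSMul R E] [AddCommMonoid F] [TopologicalSpace F] [Module R F]
    (T : E →L[R] F) {s : Set E} {M : Submodule R F} (hM : IsClosed (M : Set F))
    (hT : ∀ x ∈ s, T x ∈ M) {g : E} (hg : g ∈ (Submodule.span R s).topologicalClosure) :
    T g ∈ M := by
  have hle : (Submodule.span R s).topologicalClosure ≤ M.comap (T : E →ₗ[R] F) :=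
    Submodule.topologicalClosure_minimal _ (Submodule.span_le.mpr hT) (hM.preimage T.continuous)
  exact hle hg

namespace RKFramework

variable (F : RKFramework Ω H)

theorem analyticAt_ι (g : H) {z : ℂ} (hz : z ∈ Ω) : AnalyticAt ℂ (F.ι g) z :=
  (F.analytic g).analyticAt (F.isOpen.mem_nhds hz)

theorem eq_of_forall_ne_ι_eq {a : ℂ} (ha : a ∈ Ω) {f g : H}
    (h : ∀ z ∈ Ω, z ≠ a → F.ι f z = F.ι g z) : f = g := by
  refine F.ι_inj f g fun z hz => ?_
  rcases eq_or_ne z a with rfl | hza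
  · have hnear : F.ι f =ᶠ[𝓝[≠] z] F.ι g := by
      filter_upwards [nhdsWithin_le_nhds (F.isOpen.mem_nhds hz), self_mem_nhdsWithin]
        with x hx hxz using h x hx hxz
    exact ((F.analyticAt_ι f hz).continuousAt.eventuallyEq_nhds_iff_eventuallyEq_nhdsNE
      (F.analyticAt_ι g hz).continuousAt).mp hnear |>.eq_of_nhds
  · exact h z hz hza

theorem ι_pow_S (n : ℕ) (g : H) {z : ℂ} (hz : z ∈ Ω) :
    F.ι ((F.S ^ n) g) z = z ^ n * F.ι g z := by
  induction n with
  | zero => simp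
  | succ n ih => rw [pow_succ', mul_apply_eq_comp, F.ι_S _ z hz, ih]; ring

theorem Q_S {w : ℂ} (hw : w ∈ Ω) (g : H) : F.Q w (F.S g) = g + w • F.Q w g := by
  refine F.eq_of_forall_ne_ι_eq hw fun z hz hzw => ?_
  have hzw' : z - w ≠ 0 := sub_ne_zero.mpr hzw
  simp only [map_add, map_smul, Pi.add_apply, Pi.smul_apply, smul_eq_mul,
    F.ι_Q w hw _ z hz hzw, F.ι_S g z hz, F.ι_S g w hw]
  field_simp
  ring

theorem S_sub_smul_Q {w : ℂ} (hw : w ∈ Ω) {g : H} (hgw : F.ι g w = 0) :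
    F.S (F.Q w g) - w • F.Q w g = g := by
  refine F.eq_of_forall_ne_ι_eq hw fun z hz hzw => ?_
  have hzw' : z - w ≠ 0 := sub_ne_zero.mpr hzw
  simp only [map_sub, map_smul, Pi.sub_apply, Pi.smul_apply, smul_eq_mul, F.ι_S _ z hz,
    F.ι_Q w hw g z hz hzw, hgw]
  field_simp
  ring

theorem Q_zero_S (g : H) : F.Q 0 (F.S g) = g := by
  simpa using F.Q_S F.zero_mem g

theorem S_Q_zero {g : H} (hg0 : F.ι g 0 = 0) : F.S (F.Q 0 g) = g := by
  simpa using F.S_sub_smul_Q F.zero_mem hg0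

theorem one_le_norm_Q_zero_mul_norm_S [Nontrivial H] : 1 ≤ ‖F.Q 0‖ * ‖F.S‖ := by
  have hid : (F.Q 0).comp F.S = ContinuousLinearMap.id ℂ H :=
    ContinuousLinearMap.ext F.Q_zero_S
  calc (1 : ℝ) = ‖(F.Q 0).comp F.S‖ := by rw [hid, ContinuousLinearMap.norm_id]
    _ ≤ ‖F.Q 0‖ * ‖F.S‖ := ContinuousLinearMap.opNorm_comp_le _ _

theorem S_pow_mem_zspan (f : H) {n : ℕ} (hn : 1 ≤ n) : (F.S ^ n) f ∈ F.zspan f :=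
  Submodule.le_topologicalClosure _ (Submodule.subset_span ⟨n, hn, rfl⟩)

theorem S_pow_mem_fullSpan (f : H) (n : ℕ) : (F.S ^ n) f ∈ F.fullSpan f :=
  Submodule.le_topologicalClosure _ (Submodule.subset_span ⟨n, rfl⟩)

theorem zspan_le_fullSpan (f : H) : F.zspan f ≤ F.fullSpan f :=
  Submodule.topologicalClosure_mono (Submodule.span_mono fun _ ⟨n, _, hx⟩ => ⟨n, hx.symm⟩)

theorem S_mem_zspan {f g : H} (hg : g ∈ F.fullSpan f) : F.S g ∈ F.zspan f := by
  refine F.S.apply_mem_of_mem_topologicalClosure_span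
    (Submodule.isClosed_topologicalClosure _) ?_ hg
  rintro _ ⟨n, rfl⟩
  rw [← mul_apply_eq_comp, ← pow_succ']
  exact F.S_pow_mem_zspan f n.succ_pos

theorem ι_zero_of_mem_zspan {f g : H} (hg : g ∈ F.zspan f) : F.ι g 0 = 0 := by
  have hmem : innerSL ℂ (F.k 0) g ∈ (⊥ : Submodule ℂ ℂ) := by
    refine (innerSL ℂ (F.k 0)).apply_mem_of_mem_topologicalClosure_span
      (by simp) ?_ hg
    rintro _ ⟨n, hn, rfl⟩
    rw [Submodule.mem_bot, innerSL_apply_apply, F.reproducing 0 F.zero_mem,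
      F.ι_pow_S n f F.zero_mem, zero_pow (by omega), zero_mul]
  rwa [Submodule.mem_bot, innerSL_apply_apply, F.reproducing 0 F.zero_mem] at hmem

theorem Q_S_pow_sub_mem_fullSpan {w : ℂ} (hw : w ∈ Ω) (f : H) (n : ℕ) :
    F.Q w ((F.S ^ n) f) - w ^ n • F.Q w f ∈ F.fullSpan f := by
  induction n with
  | zero => simp
  | succ n ih =>
    have hstep : F.Q w ((F.S ^ (n + 1)) f) - w ^ (n + 1) • F.Q w f =
        (F.S ^ n) f + w • (F.Q w ((F.S ^ n) f) - w ^ n • F.Q w f) := by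
      rw [pow_succ', mul_apply_eq_comp, F.Q_S hw, smul_sub, smul_smul, ← pow_succ']
      abel
    rw [hstep]
    exact add_mem (F.S_pow_mem_fullSpan f n) (Submodule.smul_mem _ _ ih)

theorem Q_mem_fullSpan {f g : H} {w : ℂ} (hw : w ∈ Ω) (hfw : F.ι f w ≠ 0)
    (hg : g ∈ F.fullSpan f) (hgw : F.ι g w = 0) : F.Q w g ∈ F.fullSpan f := by
  -- `T` corrects `Q_w` by a multiple of `Q_w f` so as to preserve `[f]`; it agrees with `Q_w`
  -- at `g` since `g(w) = 0`.
  let T : H →L[ℂ] H := F.Q w - (F.ι f w)⁻¹ • (innerSL ℂ (F.k w)).smulRight (F.Q w f)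
  have hT : ∀ x, T x = F.Q w x - (F.ι x w / F.ι f w) • F.Q w f := fun x => by
    simp [T, F.reproducing w hw, smul_smul, div_eq_inv_mul]
  suffices hTg : T g ∈ F.fullSpan f by simpa [hT, hgw] using hTg
  refine T.apply_mem_of_mem_topologicalClosure_span
    (Submodule.isClosed_topologicalClosure _) ?_ hg
  rintro _ ⟨n, rfl⟩
  rw [hT, F.ι_pow_S n f hw, mul_div_assoc, div_self hfw, mul_one]
  exact F.Q_S_pow_sub_mem_fullSpan hw f n

theorem mem_zspan_Q_zero_of_mem_zspan_self {g : H} (hg : g ∈ F.zspan g) :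
    F.Q 0 g ∈ F.zspan (F.Q 0 g) := by
  refine (F.Q 0).apply_mem_of_mem_topologicalClosure_span
    (Submodule.isClosed_topologicalClosure _) ?_ hg
  rintro _ ⟨n, hn, rfl⟩
  obtain ⟨m, rfl⟩ := Nat.exists_eq_add_of_le' hn
  have hS : (F.S ^ (m + 1)) g = (F.S ^ (m + 1)) (F.S (F.Q 0 g)) := by
    rw [F.S_Q_zero (F.ι_zero_of_mem_zspan hg)]
  rw [hS, pow_succ', mul_apply_eq_comp, F.Q_zero_S, ← mul_apply_eq_comp,
    ← pow_succ]
  exact F.S_pow_mem_zspan _ (by omega)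

theorem S_pow_Q_zero_pow_of_mem_zspan_self {f : H} (hf : f ∈ F.zspan f) (n : ℕ) :
    (F.S ^ n) ((F.Q 0 ^ n) f) = f ∧ (F.Q 0 ^ n) f ∈ F.zspan ((F.Q 0 ^ n) f) := by
  induction n with
  | zero => simpa using hf
  | succ n ih =>
    obtain ⟨hSQ, hmem⟩ := ih
    refine ⟨?_, ?_⟩
    · rw [pow_succ, mul_apply_eq_comp, pow_succ', mul_apply_eq_comp,
        F.S_Q_zero (F.ι_zero_of_mem_zspan hmem), hSQ]
    · rw [pow_succ', mul_apply_eq_comp]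
      exact F.mem_zspan_Q_zero_of_mem_zspan_self hmem

theorem not_mem_zspan_self {f : H} (hf : f ≠ 0) : f ∉ F.zspan f := by
  intro hmem
  have hΩ : Ω ∈ 𝓝 (0 : ℂ) := F.isOpen.mem_nhds F.zero_mem
  have horder : analyticOrderAt (F.ι f) 0 = ⊤ := by
    refine ENat.eq_top_iff_forall_ge.mpr fun n =>
      (natCast_le_analyticOrderAt (F.analyticAt_ι f F.zero_mem)).mpr
        ⟨_, F.analyticAt_ι ((F.Q 0 ^ n) f) F.zero_mem, ?_⟩
    filter_upwards [hΩ] with z hz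
    rw [sub_zero, smul_eq_mul, ← F.ι_pow_S n _ hz,
      (F.S_pow_Q_zero_pow_of_mem_zspan_self hmem n).1]
  have hzero : Set.EqOn (F.ι f) 0 Ω :=
    ((F.analytic f).analyticOnNhd F.isOpen).eqOn_zero_of_preconnected_of_eventuallyEq_zero
      F.isConnected.isPreconnected F.zero_mem (analyticOrderAt_eq_top.mp horder)
  exact hf (F.ι_inj f 0 (by simpa using hzero))

theorem J_mem_fullSpan (f : H) : F.J f ∈ F.fullSpan f :=
  sub_mem (by simpa using F.S_pow_mem_fullSpan f 0) (F.zspan_le_fullSpan f (SetLike.coe_mem _))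

theorem inner_J_eq_zero {f g : H} (hg : g ∈ F.zspan f) : ⟪g, F.J f⟫ = 0 :=
  (Submodule.mem_orthogonal _ _).mp (Submodule.sub_starProjection_mem_orthogonal f) g hg

theorem J_ne_zero {f : H} (hf : f ≠ 0) : F.J f ≠ 0 := fun hJ => by
  have hP := SetLike.coe_mem ((F.zspan f).orthogonalProjection f)
  rw [← sub_eq_zero.mp hJ] at hP
  exact F.not_mem_zspan_self hf hP

theorem norm_Q_zero_sq_add_norm_Q_sq_le {f : H} {w : ℂ} (hw : w ∈ Ω)
    (hJw : F.ι (F.J f) w = 0) (hfw : F.ι f w ≠ 0) :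
    ‖F.Q 0‖ ^ 2 + ‖F.Q w‖ ^ 2 ≤ ‖w‖ ^ 2 * ‖F.Q 0‖ ^ 2 * ‖F.Q w‖ ^ 2 := by
  set J := F.J f
  set h := F.Q w J
  have hJ : F.S h - w • h = J := F.S_sub_smul_Q hw hJw
  have hJ0 : J ≠ 0 := F.J_ne_zero fun hf => hfw (by simp [hf])
  have hh0 : 0 < ‖h‖ := norm_pos_iff.mpr fun h0 => hJ0 (by rw [← hJ, h0]; simp)
  have horth : ⟪F.S h, J⟫ = 0 :=
    F.inner_J_eq_zero (F.S_mem_zspan (F.Q_mem_fullSpan hw hfw (F.J_mem_fullSpan f) hJw))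
  have hpyth : ‖w‖ ^ 2 * ‖h‖ ^ 2 = ‖F.S h‖ ^ 2 + ‖J‖ ^ 2 := by
    have hwh : w • h = F.S h - J := by rw [← hJ]; abel
    rw [← mul_pow, ← norm_smul, hwh, @norm_sub_sq ℂ, horth]
    simp
  have hQ0 : ‖h‖ ≤ ‖F.Q 0‖ * ‖F.S h‖ :=
    calc ‖h‖ = ‖F.Q 0 (F.S h)‖ := by rw [F.Q_zero_S]
      _ ≤ ‖F.Q 0‖ * ‖F.S h‖ := (F.Q 0).le_opNorm _
  have hQw : ‖h‖ ≤ ‖F.Q w‖ * ‖J‖ := (F.Q w).le_opNorm J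
  refine le_of_mul_le_mul_left ?_ (pow_pos hh0 2)
  calc ‖h‖ ^ 2 * (‖F.Q 0‖ ^ 2 + ‖F.Q w‖ ^ 2)
      = ‖F.Q 0‖ ^ 2 * ‖h‖ ^ 2 + ‖F.Q w‖ ^ 2 * ‖h‖ ^ 2 := by ring
    _ ≤ ‖F.Q 0‖ ^ 2 * (‖F.Q w‖ * ‖J‖) ^ 2 + ‖F.Q w‖ ^ 2 * (‖F.Q 0‖ * ‖F.S h‖) ^ 2 := by
      gcongr
    _ = ‖F.Q 0‖ ^ 2 * ‖F.Q w‖ ^ 2 * (‖F.S h‖ ^ 2 + ‖J‖ ^ 2) := by ring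
    _ = ‖h‖ ^ 2 * (‖w‖ ^ 2 * ‖F.Q 0‖ ^ 2 * ‖F.Q w‖ ^ 2) := by rw [← hpyth]; ring

end RKFramework

theorem stmt12_general (F : RKFramework Ω H) (f : H)
    (w : ℂ) (hwΩ : w ∈ Ω)
    (hJw : F.ι (F.J f) w = 0) (hfw : F.ι f w ≠ 0) :
    Real.sqrt (1 + ‖F.S‖ ^ 2 * ‖F.Q w‖ ^ 2) ≤
      ‖w‖ * (‖F.Q 0‖ * (‖F.S‖ * ‖F.Q w‖)) := by
  have : Nontrivial H := ⟨f, 0, fun hf => hfw (by simp [hf])⟩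
  have hQS := F.one_le_norm_Q_zero_mul_norm_S
  have hQ := F.norm_Q_zero_sq_add_norm_Q_sq_le hwΩ hJw hfw
  refine Real.sqrt_le_iff.mpr ⟨by positivity, ?_⟩
  calc 1 + ‖F.S‖ ^ 2 * ‖F.Q w‖ ^ 2
      ≤ (‖F.Q 0‖ * ‖F.S‖) ^ 2 + ‖F.S‖ ^ 2 * ‖F.Q w‖ ^ 2 := by gcongr; exact one_le_pow₀ hQS
    _ = ‖F.S‖ ^ 2 * (‖F.Q 0‖ ^ 2 + ‖F.Q w‖ ^ 2) := by ring
    _ ≤ ‖F.S‖ ^ 2 * (‖w‖ ^ 2 * ‖F.Q 0‖ ^ 2 * ‖F.Q w‖ ^ 2) := by gcongr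
    _ = (‖w‖ * (‖F.Q 0‖ * (‖F.S‖ * ‖F.Q w‖))) ^ 2 := by ring

/-- Theorem 5.1: any extra zero `w ≠ 0` of the `S`-inner function `J = f − P_{[zf]} f`
(i.e. a zero of `J` that is not a zero of `f`) satisfies
`|w| ≥ √(1 + ‖S‖²‖Q_w‖²) / (‖Q₀‖‖S‖‖Q_w‖)`. -/
theorem stmt12 (F : RKFramework Ω H) (f : H) (hf : f ≠ 0)
    (w : ℂ) (hwΩ : w ∈ Ω) (hw0 : w ≠ 0)
    (hJw : F.ι (F.J f) w = 0) (hfw : F.ι f w ≠ 0) :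
    Real.sqrt (1 + ‖F.S‖ ^ 2 * ‖F.Q w‖ ^ 2) ≤
      ‖w‖ * (‖F.Q 0‖ * (‖F.S‖ * ‖F.Q w‖)) :=
  stmt12_general F f w hwΩ hJw hfw
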